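/- arXiv:1507.06276 — 2 statements merged into one kernel-verified Lean document; each statement's English description precedes it below -/
import Mathlib

section
/- Let (H,R) be a braided bialgebra over a field k and let K ∈ H be an invertible element satisfying Δ(K) = (K⊗1)·R·(1⊗K)·R_21 in H⊗H. Then K satisfies the reflection equation (K⊗1)·R·(1⊗K)·R_21 = R·(1⊗K)·R_21·(K⊗1) in H⊗H. -/
/- Braided bialgebras: basic tensor-leg maps and the universal R-matrix axioms. -/

open scoped TensorProduct

noncomputable section

variable (k H : Type*) [Field k] [Ring H] [Bialgebra k H]

/-- The flip `a ⊗ b ↦ b ⊗ a` on `H ⊗[k] H`, as an algebra homomorphism. -/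
def tflip : H ⊗[k] H →ₐ[k] H ⊗[k] H := (Algebra.TensorProduct.comm k H H).toAlgHom

/-- `s ⊗ t ↦ s ⊗ t ⊗ 1 : H ⊗ H → H ⊗ H ⊗ H`. -/
def leg12 : H ⊗[k] H →ₐ[k] H ⊗[k] (H ⊗[k] H) :=
  Algebra.TensorProduct.map (AlgHom.id k H) Algebra.TensorProduct.includeLeft

/-- `s ⊗ t ↦ s ⊗ 1 ⊗ t : H ⊗ H → H ⊗ H ⊗ H`. -/
def leg13 : H ⊗[k] H →ₐ[k] H ⊗[k] (H ⊗[k] H) :=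
  Algebra.TensorProduct.map (AlgHom.id k H) Algebra.TensorProduct.includeRight

/-- `s ⊗ t ↦ 1 ⊗ s ⊗ t : H ⊗ H → H ⊗ H ⊗ H`. -/
def leg23 : H ⊗[k] H →ₐ[k] H ⊗[k] (H ⊗[k] H) :=
  Algebra.TensorProduct.includeRight

/-- `Δ ⊗ id : H ⊗ H → H ⊗ H ⊗ H`. -/
def comulLeft : H ⊗[k] H →ₐ[k] H ⊗[k] (H ⊗[k] H) :=
  (Algebra.TensorProduct.assoc k k k H H H).toAlgHom.comp
    (Algebra.TensorProduct.map (Bialgebra.comulAlgHom k H) (AlgHom.id k H))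

/-- `id ⊗ Δ : H ⊗ H → H ⊗ H ⊗ H`. -/
def comulRight : H ⊗[k] H →ₐ[k] H ⊗[k] (H ⊗[k] H) :=
  Algebra.TensorProduct.map (AlgHom.id k H) (Bialgebra.comulAlgHom k H)

/-- `(H, R)` is a braided bialgebra with `R⁻¹ = Rinv`:  `R` is an invertible element of
`H ⊗ H` satisfying `Δ(x) · R = R · Δ^op(x)` for all `x` and the two hexagon identities
`(Δ ⊗ id)(R) = R₂₃ · R₁₃` and `(id ⊗ Δ)(R) = R₁₂ · R₁₃`. -/
def IsUniversalRMatrix (R Rinv : H ⊗[k] H) : Prop :=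
  R * Rinv = 1 ∧ Rinv * R = 1 ∧
  (∀ x : H, Bialgebra.comulAlgHom k H x * R = R * tflip k H (Bialgebra.comulAlgHom k H x)) ∧
  comulLeft k H R = leg23 k H R * leg13 k H R ∧
  comulRight k H R = leg12 k H R * leg13 k H R

@[simp]
theorem tflip_tmul (a b : H) : tflip k H (a ⊗ₜ b) = b ⊗ₜ a := rfl

@[simp]
theorem tflip_tflip (x : H ⊗[k] H) : tflip k H (tflip k H x) = x :=
  TensorProduct.comm_comm k H H x

theorem universal_K_matrix_satisfies_reflection_equation
    (R Rinv : H ⊗[k] H) (hR : IsUniversalRMatrix k H R Rinv)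
    (K : H)
    (hΔK : Bialgebra.comulAlgHom k H K =
      (K ⊗ₜ[k] (1 : H)) * R * ((1 : H) ⊗ₜ[k] K) * tflip k H R) :
    (K ⊗ₜ[k] (1 : H)) * R * ((1 : H) ⊗ₜ[k] K) * tflip k H R
      = R * ((1 : H) ⊗ₜ[k] K) * tflip k H R * (K ⊗ₜ[k] (1 : H)) := by
  obtain ⟨hRRinv, -, hquasi, -, -⟩ := hR
  have hflip : tflip k H ((K ⊗ₜ[k] (1 : H)) * R * ((1 : H) ⊗ₜ[k] K) * tflip k H R)
      = (1 : H) ⊗ₜ[k] K * tflip k H R * (K ⊗ₜ[k] (1 : H)) * R := by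
    simp only [map_mul, tflip_tmul, tflip_tflip]
  have hcomm := hquasi K
  rw [hΔK, hflip] at hcomm
  apply isRightRegular_of_mul_eq_one hRRinv
  simpa only [mul_assoc] using hcomm
end
end

section
/- Let (H,R) be a braided bialgebra over a field k and let θ ∈ H be an invertible central element satisfying Δ(θ) = (R·R_21)^{-1}·(θ⊗θ). Set K' = (1⊗θ^{-1})·R·R_21 ∈ H⊗H. Then in H⊗H⊗H one has (id⊗Δ)(K') = K'_{12}·R_{23}·K'_{13}·R_{32}, where, writing K' = Σ a_i⊗b_i, one sets K'_{12} = Σ a_i⊗b_i⊗1, K'_{13} = Σ a_i⊗1⊗b_i, R_{23} = 1⊗R, and R_{32} = 1⊗R_21. -/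
/- Braided bialgebras: basic tensor-leg maps and the universal R-matrix axioms. -/

open scoped TensorProduct

noncomputable section

variable (k H : Type*) [Field k] [Ring H] [Bialgebra k H]

/-!
Put `Q = R R₂₁`. Inverting the ribbon condition gives `Δ(θ⁻¹) = (θ⁻¹ ⊗ θ⁻¹) Q`, and since `θ⁻¹` is
central both sides of the claim carry the same factor `1 ⊗ θ⁻¹ ⊗ θ⁻¹`. What remains is the word
identity `R₂₃R₃₂ · R₁₂R₁₃R₃₁R₂₁ = R₁₂R₂₁ · R₂₃ · R₁₃R₃₁ · R₃₂`, which follows from the quantum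
Yang–Baxter equation `R₁₂R₁₃R₂₃ = R₂₃R₁₃R₁₂` and three copies of it with permuted tensor legs.
-/

theorem commute_tmul_of_forall_commute {R A B : Type*} [CommSemiring R] [Semiring A] [Semiring B]
    [Algebra R A] [Algebra R B] {a : A} {b : B} (ha : ∀ x, Commute a x) (hb : ∀ y, Commute b y)
    (z : A ⊗[R] B) : Commute (a ⊗ₜ[R] b) z := by
  induction z using TensorProduct.induction_on with
  | zero => exact Commute.zero_right _
  | tmul x y => exact (ha x).tmul (hb y)
  | add x y hx hy => exact hx.add_right hy

def swap12 : H ⊗[k] (H ⊗[k] H) →ₐ[k] H ⊗[k] (H ⊗[k] H) :=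
  (Algebra.TensorProduct.leftComm k H H H).toAlgHom

def swap23 : H ⊗[k] (H ⊗[k] H) →ₐ[k] H ⊗[k] (H ⊗[k] H) :=
  Algebra.TensorProduct.map (AlgHom.id k H) (tflip k H)

@[simp]
theorem swap12_leg12 (z : H ⊗[k] H) : swap12 k H (leg12 k H z) = leg12 k H (tflip k H z) :=
  AlgHom.congr_fun (φ₁ := (swap12 k H).comp (leg12 k H)) (φ₂ := (leg12 k H).comp (tflip k H))
    (by ext <;> rfl) z

@[simp]
theorem swap12_leg13 (z : H ⊗[k] H) : swap12 k H (leg13 k H z) = leg23 k H z :=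
  AlgHom.congr_fun (φ₁ := (swap12 k H).comp (leg13 k H)) (φ₂ := leg23 k H) (by ext <;> rfl) z

@[simp]
theorem swap12_leg23 (z : H ⊗[k] H) : swap12 k H (leg23 k H z) = leg13 k H z :=
  AlgHom.congr_fun (φ₁ := (swap12 k H).comp (leg23 k H)) (φ₂ := leg13 k H) (by ext <;> rfl) z

@[simp]
theorem swap23_leg12 (z : H ⊗[k] H) : swap23 k H (leg12 k H z) = leg13 k H z :=
  AlgHom.congr_fun (φ₁ := (swap23 k H).comp (leg12 k H)) (φ₂ := leg13 k H) (by ext <;> rfl) z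

@[simp]
theorem swap23_leg13 (z : H ⊗[k] H) : swap23 k H (leg13 k H z) = leg12 k H z :=
  AlgHom.congr_fun (φ₁ := (swap23 k H).comp (leg13 k H)) (φ₂ := leg12 k H) (by ext <;> rfl) z

@[simp]
theorem swap23_leg23 (z : H ⊗[k] H) : swap23 k H (leg23 k H z) = leg23 k H (tflip k H z) := rfl

theorem comulRight_tflip (z : H ⊗[k] H) :
    comulRight k H (tflip k H z) = swap12 k H (swap23 k H (comulLeft k H z)) := by
  induction z using TensorProduct.induction_on with
  | zero => simp
  | tmul a b =>
    change b ⊗ₜ[k] Bialgebra.comulAlgHom k H a = swap12 k H (swap23 k H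
      (Algebra.TensorProduct.assoc k k k H H H (Bialgebra.comulAlgHom k H a ⊗ₜ[k] b)))
    induction Bialgebra.comulAlgHom k H a using TensorProduct.induction_on with
    | zero => simp
    | tmul x y => rfl
    | add u v hu hv => simp only [TensorProduct.tmul_add, TensorProduct.add_tmul, map_add, hu, hv]
  | add x y hx hy => simp only [map_add, hx, hy]

namespace IsUniversalRMatrix

variable {k H} {R Rinv : H ⊗[k] H}

theorem comulRight_mul_leg23 (hR : IsUniversalRMatrix k H R Rinv) (z : H ⊗[k] H) :
    comulRight k H z * leg23 k H R = leg23 k H R * swap23 k H (comulRight k H z) := by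
  obtain ⟨-, -, hcomm, -, -⟩ := hR
  induction z using TensorProduct.induction_on with
  | zero => simp
  | tmul a b =>
    change a ⊗ₜ[k] Bialgebra.comulAlgHom k H b * 1 ⊗ₜ[k] R
      = 1 ⊗ₜ[k] R * a ⊗ₜ[k] tflip k H (Bialgebra.comulAlgHom k H b)
    simp only [Algebra.TensorProduct.tmul_mul_tmul, mul_one, one_mul, hcomm b]
  | add x y hx hy => simp only [map_add, add_mul, mul_add, hx, hy]

theorem yangBaxter (hR : IsUniversalRMatrix k H R Rinv) :
    leg12 k H R * leg13 k H R * leg23 k H R = leg23 k H R * leg13 k H R * leg12 k H R := by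
  simpa only [hR.2.2.2.2, map_mul, swap23_leg12, swap23_leg13, mul_assoc]
    using hR.comulRight_mul_leg23 R

theorem comulRight_tflip_eq_leg13_mul_leg12 (hR : IsUniversalRMatrix k H R Rinv) :
    comulRight k H (tflip k H R) = leg13 k H (tflip k H R) * leg12 k H (tflip k H R) := by
  rw [comulRight_tflip, hR.2.2.2.1, map_mul, map_mul, swap23_leg23, swap23_leg13, swap12_leg23,
    swap12_leg12]

theorem leg23_mul_comulRight_R_R21 (hR : IsUniversalRMatrix k H R Rinv) :
    leg23 k H (R * tflip k H R) * comulRight k H (R * tflip k H R)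
      = leg12 k H (R * tflip k H R) * leg23 k H R * leg13 k H (R * tflip k H R) *
          leg23 k H (tflip k H R) := by
  set a := leg12 k H R with ha
  set a' := leg12 k H (tflip k H R) with ha'
  set b := leg13 k H R with hb
  set b' := leg13 k H (tflip k H R) with hb'
  set c := leg23 k H R with hc
  set c' := leg23 k H (tflip k H R) with hc'
  have hY1 : a * b * c = c * b * a := hR.yangBaxter
  have hY2 : a' * c * b = b * c * a' := by
    simpa [ha, ha', hb, hb', hc, hc'] using congrArg (swap12 k H) hY1
  have hY3 : c' * b' * a' = a' * b' * c' := by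
    simpa [ha, ha', hb, hb', hc, hc'] using congrArg (swap12 k H) (congrArg (swap23 k H) hY2)
  have hY4 : b * a * c' = c' * a * b := by
    simpa [ha, ha', hb, hb', hc, hc'] using congrArg (swap23 k H) hY1
  rw [map_mul, map_mul, map_mul, map_mul, hR.2.2.2.2, hR.comulRight_tflip_eq_leg13_mul_leg12]
  calc c * c' * (a * b * (b' * a'))
      = c * (c' * a * b) * b' * a' := by simp only [mul_assoc]
    _ = c * b * a * (c' * b' * a') := by rw [← hY4]; simp only [mul_assoc]
    _ = a * (b * c * a') * b' * c' := by rw [← hY1, hY3]; simp only [mul_assoc]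
    _ = a * a' * c * (b * b') * c' := by rw [← hY2]; simp only [mul_assoc]

theorem comulAlgHom_inverse_eq (hR : IsUniversalRMatrix k H R Rinv) {θ θinv : H}
    (hθ : θ * θinv = 1) (hθ' : θinv * θ = 1)
    (hΔθ : Bialgebra.comulAlgHom k H θ = (tflip k H Rinv * Rinv) * (θ ⊗ₜ[k] θ)) :
    Bialgebra.comulAlgHom k H θinv = (θinv ⊗ₜ[k] θinv) * (R * tflip k H R) := by
  obtain ⟨-, hRinv_mul, -, -, -⟩ := hR
  refine left_inv_eq_right_inv (a := Bialgebra.comulAlgHom k H θ) ?_ ?_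
  · rw [← map_mul, hθ', map_one]
  · calc Bialgebra.comulAlgHom k H θ * ((θinv ⊗ₜ[k] θinv) * (R * tflip k H R))
        = tflip k H Rinv * (Rinv * R) * tflip k H R := by
          rw [hΔθ, mul_assoc _ (θ ⊗ₜ[k] θ), ← mul_assoc (θ ⊗ₜ[k] θ),
            Algebra.TensorProduct.tmul_mul_tmul, hθ, ← Algebra.TensorProduct.one_def, one_mul]
          simp only [mul_assoc]
      _ = 1 := by rw [hRinv_mul, mul_one, ← map_mul, hRinv_mul, map_one]

end IsUniversalRMatrix

/-- in a braided bialgebra `(H, R)` with an invertible central element `θ`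
satisfying `Δ(θ) = (R · R₂₁)⁻¹ · (θ ⊗ θ)` (where `(R · R₂₁)⁻¹ = R₂₁⁻¹ · R⁻¹`),
the element `K' = (1 ⊗ θ⁻¹) · R · R₂₁` satisfies
`(id ⊗ Δ)(K') = K'₁₂ · R₂₃ · K'₁₃ · R₃₂` in `H ⊗ H ⊗ H`. -/
theorem id_comul_of_ribbon_twisted_R_R21
    (R Rinv : H ⊗[k] H) (hR : IsUniversalRMatrix k H R Rinv)
    (θ θinv : H) (hθ : θ * θinv = 1) (hθ' : θinv * θ = 1)
    (hcentral : ∀ x : H, θ * x = x * θ)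
    (hΔθ : Bialgebra.comulAlgHom k H θ
      = (tflip k H Rinv * Rinv) * (θ ⊗ₜ[k] θ)) :
    comulRight k H (((1 : H) ⊗ₜ[k] θinv) * R * tflip k H R)
      = leg12 k H (((1 : H) ⊗ₜ[k] θinv) * R * tflip k H R) * leg23 k H R *
          leg13 k H (((1 : H) ⊗ₜ[k] θinv) * R * tflip k H R) *
          leg23 k H (tflip k H R) := by
  have hθinv_comm : ∀ x : H, Commute θinv x := fun x =>
    Commute.units_inv_left (u := ⟨θ, θinv, hθ, hθ'⟩) (hcentral x)
  have hθinv₁₃_comm : ∀ z, Commute (leg13 k H ((1 : H) ⊗ₜ[k] θinv)) z :=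
    commute_tmul_of_forall_commute Commute.one_left
      (commute_tmul_of_forall_commute Commute.one_left hθinv_comm)
  have hlegs : leg12 k H ((1 : H) ⊗ₜ[k] θinv) * leg13 k H ((1 : H) ⊗ₜ[k] θinv)
      = leg23 k H (θinv ⊗ₜ[k] θinv) := by
    simp [leg12, leg13, leg23, Algebra.TensorProduct.tmul_mul_tmul]
  have hcomul : comulRight k H ((1 : H) ⊗ₜ[k] θinv)
      = leg23 k H (θinv ⊗ₜ[k] θinv) * leg23 k H (R * tflip k H R) := by
    rw [← map_mul, ← hR.comulAlgHom_inverse_eq hθ hθ' hΔθ]; rfl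
  rw [mul_assoc _ R, map_mul, hcomul, mul_assoc, hR.leg23_mul_comulRight_R_R21, ← hlegs]
  simp only [map_mul (leg12 k H), map_mul (leg13 k H), mul_assoc]
  rw [(hθinv₁₃_comm _).left_comm, (hθinv₁₃_comm _).left_comm, (hθinv₁₃_comm _).left_comm]
end
end
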